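/- arXiv:2301.01292 — 2 statements merged into one kernel-verified Lean document; each statement's English description precedes it below -/
import Mathlib

section
/- Let φ : ℝ → ℝ be a C^∞ function with φ ≥ 0, φ supported in [−1, 1], and ∫_ℝ φ(s) ds = 1. Let c ∈ (0, 1/100] and let σ : ℝ → ℝ be a C^∞ function supported in [−1/2, 1/2] with 0 ≤ σ(t) ≤ c for all t and σ(t) = c for |t| ≤ 1/4. Let L > 0 and let h : ℝ → ℝ be an L-Lipschitz function such that h(t) = h₊(t) for all t ≥ 0 and h(t) = h₋(t) for all t ≤ 0, where h₊, h₋ : ℝ → ℝ are C^∞ functions. For ε > 0 set σ_ε(t) := ε³·σ(t/ε) and define h_ε(t) := ∫_ℝ h(t − σ_ε(t)·s)·φ(s) ds. Define h' : ℝ → ℝ by h'(u) = (deriv h₊)(u) for u > 0, h'(u) = (deriv h₋)(u) for u < 0, and h'(0) = (deriv h₊)(0). Then there exists ε₁ > 0 such that for all ε with 0 < ε < ε₁, the function h_ε is differentiable at every t ∈ ℝ and (deriv h_ε)(t) = ∫_ℝ h'(t − σ_ε(t)·s)·(1 − s·ε²·(deriv σ)(t/ε))·φ(s) ds. -/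
set_option maxHeartbeats 1000000 in
open Real MeasureTheory in
/-- The derivative formula for the variable-radius mollification in the proof of
the smoothing lemma (Lemma 4.5): with `σ_ε(t) = ε³·σ(t/ε)` and
`h_ε(t) = ∫ h(t − σ_ε(t)s) φ(s) ds`, for all small `ε > 0` the function `h_ε` is
differentiable everywhere with
`h_ε'(t) = ∫ h'(t − σ_ε(t)s)·(1 − s ε² σ'(t/ε))·φ(s) ds`. -/
theorem mollification_deriv (φ : ℝ → ℝ) (hφ_smooth : ContDiff ℝ (⊤ : ℕ∞) φ)
    (hφ_nonneg : ∀ s, 0 ≤ φ s) (hφ_supp : Function.support φ ⊆ Set.Icc (-1 : ℝ) 1)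
    (hφ_int : ∫ s : ℝ, φ s = 1)
    (c : ℝ) (hc : c ∈ Set.Ioc (0 : ℝ) (1 / 100))
    (σ : ℝ → ℝ) (hσ_smooth : ContDiff ℝ (⊤ : ℕ∞) σ)
    (hσ_supp : Function.support σ ⊆ Set.Icc (-(1 / 2) : ℝ) (1 / 2))
    (hσ_nonneg : ∀ t, 0 ≤ σ t) (hσ_le : ∀ t, σ t ≤ c)
    (hσ_eq : ∀ t : ℝ, |t| ≤ 1 / 4 → σ t = c)
    (L : ℝ) (hL : 0 < L) (h hp hm : ℝ → ℝ)
    (hLip : ∀ s t : ℝ, |h t - h s| ≤ L * |t - s|)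
    (hp_smooth : ContDiff ℝ (⊤ : ℕ∞) hp) (hm_smooth : ContDiff ℝ (⊤ : ℕ∞) hm)
    (heqp : ∀ t : ℝ, 0 ≤ t → h t = hp t) (heqm : ∀ t : ℝ, t ≤ 0 → h t = hm t)
    (σε : ℝ → ℝ → ℝ) (hσε : ∀ ε t, σε ε t = ε ^ 3 * σ (t / ε))
    (hε : ℝ → ℝ → ℝ) (hhε : ∀ ε t, hε ε t = ∫ s : ℝ, h (t - σε ε t * s) * φ s)
    (h' : ℝ → ℝ) (h'pos : ∀ u : ℝ, 0 < u → h' u = deriv hp u)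
    (h'neg : ∀ u : ℝ, u < 0 → h' u = deriv hm u) (h'zero : h' 0 = deriv hp 0) :
    ∃ ε₁ > 0, ∀ ε : ℝ, 0 < ε → ε < ε₁ → ∀ t : ℝ,
      HasDerivAt (hε ε)
        (∫ s : ℝ, h' (t - σε ε t * s) * (1 - s * ε ^ 2 * deriv σ (t / ε)) * φ s) t := by
  classical
  refine ⟨1, one_pos, fun ε hε0 _ t => ?_⟩
  have hεne : (ε : ℝ) ≠ 0 := ne_of_gt hε0
  -- continuity of h
  have hcont : Continuous h := by
    have : LipschitzWith (Real.toNNReal L) h := by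
      apply LipschitzWith.of_dist_le_mul
      intro x y
      have := hLip y x
      simpa [Real.dist_eq, Real.coe_toNNReal L hL.le] using this
    exact this.continuous
  -- bound on deriv σ
  have hσc : HasCompactSupport σ :=
    HasCompactSupport.intro isCompact_Icc fun x hx => by
      by_contra hne
      exact hx (hσ_supp hne)
  have hσderivc : HasCompactSupport (deriv σ) := hσc.deriv
  obtain ⟨M, hM⟩ := hσderivc.exists_bound_of_continuous (hσ_smooth.continuous_deriv (by simp))
  have hM0 : 0 ≤ M := le_trans (norm_nonneg _) (hM 0)
  -- Lipschitz of σ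
  have hσlip : ∀ x y : ℝ, |σ x - σ y| ≤ M * |x - y| := by
    intro x y
    have := Convex.norm_image_sub_le_of_norm_deriv_le
      (f := σ) (fun z _ => (hσ_smooth.differentiable (by simp)).differentiableAt)
      (fun z _ => hM z) (convex_univ) (Set.mem_univ y) (Set.mem_univ x)
    simpa [Real.norm_eq_abs] using this
  have hσcont : Continuous σ := hσ_smooth.continuous
  have hFscont : ∀ x : ℝ, Continuous fun s : ℝ => h (x - ε ^ 3 * σ (x / ε) * s) * φ s := fun x =>
    (hcont.comp (continuous_const.sub (continuous_const.mul continuous_id))).mul hφ_smooth.continuous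
  -- the parametric family
  set F : ℝ → ℝ → ℝ := fun x s => h (x - ε ^ 3 * σ (x / ε) * s) * φ s with hF
  set F' : ℝ → ℝ := fun s =>
    h' (t - σε ε t * s) * (1 - s * ε ^ 2 * deriv σ (t / ε)) * φ s with hF'
  have hεfun : hε ε = fun x => ∫ s : ℝ, F x s := by
    funext x
    simp [hF, hhε, hσε]
  rw [hεfun]
  have hφ_int' : Integrable φ := by
    apply (hφ_smooth.continuous).integrable_of_hasCompactSupport
    exact HasCompactSupport.intro isCompact_Icc fun x hx => by
      by_contra hne; exact hx (hφ_supp hne)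
  have hφabs : ∀ s, φ s ≠ 0 → |s| ≤ 1 := by
    intro s hs
    have := hφ_supp hs
    rw [abs_le]; exact ⟨this.1, this.2⟩
  -- measurability of h'
  have h'eq : h' = fun u => if u < 0 then deriv hm u else deriv hp u := by
    funext u
    rcases lt_trichotomy u 0 with hu | hu | hu
    · simp [hu, h'neg u hu]
    · simp [hu, h'zero]
    · simp [not_lt.mpr hu.le, h'pos u hu]
  have h'meas : Measurable h' := by
    rw [h'eq]
    exact Measurable.ite (measurableSet_lt measurable_id measurable_const)
      ((hm_smooth.continuous_deriv (by simp)).measurable)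
      ((hp_smooth.continuous_deriv (by simp)).measurable)
  -- apply the parametric derivative lemma
  have main := hasDerivAt_integral_of_dominated_loc_of_lip
    (F := F) (F' := F') (x₀ := t) (μ := volume)
    (bound := fun s => L * (1 + ε ^ 2 * M) * φ s) Filter.univ_mem ?_ ?_ ?_ ?_ ?_ ?_
  · exact main.2
  · -- measurability of F x
    filter_upwards with x
    exact (hFscont x).aestronglyMeasurable
  · -- integrability of F t
    apply (hFscont t).integrable_of_hasCompactSupport
    apply HasCompactSupport.intro isCompact_Icc
    intro s hs
    have : φ s = 0 := by by_contra hne; exact hs (hφ_supp hne)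
    simp [hF, this]
  · -- measurability of F'
    apply Measurable.aestronglyMeasurable
    apply Measurable.mul
    apply Measurable.mul
    · exact h'meas.comp (continuous_const.sub (continuous_const.mul continuous_id)).measurable
    · exact (continuous_const.sub ((continuous_id.mul continuous_const).mul continuous_const)).measurable
    · exact hφ_smooth.continuous.measurable
  · -- Lipschitz bound
    filter_upwards with s
    apply LipschitzWith.lipschitzOnWith
    apply LipschitzWith.of_dist_le_mul
    intro x y
    by_cases hs : φ s = 0
    · simp [hF, hs, dist_self]
    · have hs1 : |s| ≤ 1 := hφabs s hs
      have key : |F x s - F y s| ≤ L * (1 + ε ^ 2 * M) * φ s * |x - y| := by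
        have h1 : |F x s - F y s| = |h (x - ε ^ 3 * σ (x / ε) * s) - h (y - ε ^ 3 * σ (y / ε) * s)| * φ s := by
          rw [hF]; rw [← sub_mul, abs_mul, abs_of_nonneg (hφ_nonneg s)]
        have h2 : |h (x - ε ^ 3 * σ (x / ε) * s) - h (y - ε ^ 3 * σ (y / ε) * s)| ≤
            L * |(x - ε ^ 3 * σ (x / ε) * s) - (y - ε ^ 3 * σ (y / ε) * s)| := hLip _ _
        have h3 : |(x - ε ^ 3 * σ (x / ε) * s) - (y - ε ^ 3 * σ (y / ε) * s)| ≤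
            (1 + ε ^ 2 * M) * |x - y| := by
          have e1 : (x - ε ^ 3 * σ (x / ε) * s) - (y - ε ^ 3 * σ (y / ε) * s)
              = (x - y) - ε ^ 3 * s * (σ (x / ε) - σ (y / ε)) := by ring
          rw [e1]
          refine le_trans (abs_sub _ _) ?_
          have h4 : |ε ^ 3 * s * (σ (x / ε) - σ (y / ε))| ≤ ε ^ 2 * M * |x - y| := by
            have h5 : ε * |σ (x / ε) - σ (y / ε)| ≤ M * |x - y| := by
              have h5a := hσlip (x / ε) (y / ε)
              have e2 : |x / ε - y / ε| = |x - y| / ε := by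
                rw [div_sub_div_same, abs_div, abs_of_pos hε0]
              rw [e2] at h5a
              calc ε * |σ (x / ε) - σ (y / ε)| ≤ ε * (M * (|x - y| / ε)) :=
                    mul_le_mul_of_nonneg_left h5a hε0.le
                _ = M * |x - y| := by field_simp
            have h6 : |ε ^ 3 * s * (σ (x / ε) - σ (y / ε))|
                = ε ^ 3 * |s| * |σ (x / ε) - σ (y / ε)| := by
              rw [abs_mul, abs_mul, abs_of_pos (by positivity : (0:ℝ) < ε ^ 3)]
            rw [h6]
            calc ε ^ 3 * |s| * |σ (x / ε) - σ (y / ε)|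
                = (ε ^ 2 * |s|) * (ε * |σ (x / ε) - σ (y / ε)|) := by ring
              _ ≤ (ε ^ 2 * 1) * (M * |x - y|) := by
                  apply mul_le_mul (mul_le_mul_of_nonneg_left hs1 (by positivity)) h5
                    (by positivity) (by positivity)
              _ = ε ^ 2 * M * |x - y| := by ring
          nlinarith [abs_nonneg (x - y)]
        calc |F x s - F y s| = |h (x - ε ^ 3 * σ (x / ε) * s) - h (y - ε ^ 3 * σ (y / ε) * s)| * φ s := h1
          _ ≤ (L * ((1 + ε ^ 2 * M) * |x - y|)) * φ s := by
              apply mul_le_mul_of_nonneg_right _ (hφ_nonneg s)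
              exact le_trans h2 (mul_le_mul_of_nonneg_left h3 hL.le)
          _ = L * (1 + ε ^ 2 * M) * φ s * |x - y| := by ring
      have hb : (0:ℝ) ≤ L * (1 + ε ^ 2 * M) * φ s := by
        have : (0:ℝ) ≤ ε ^ 2 * M := mul_nonneg (by positivity) hM0
        have h1M : (0:ℝ) ≤ 1 + ε ^ 2 * M := by linarith
        exact mul_nonneg (mul_nonneg hL.le h1M) (hφ_nonneg s)
      calc dist (F x s) (F y s) = |F x s - F y s| := Real.dist_eq _ _
        _ ≤ L * (1 + ε ^ 2 * M) * φ s * |x - y| := key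
        _ = (Real.nnabs (L * (1 + ε ^ 2 * M) * φ s) : ℝ) * dist x y := by
            rw [Real.coe_nnabs, abs_of_nonneg hb, Real.dist_eq]
  · -- integrability of bound
    exact hφ_int'.const_mul _
  · -- a.e. differentiability
    have key : ∀ s : ℝ, t - ε ^ 3 * σ (t / ε) * s ≠ 0 → HasDerivAt (F · s) (F' s) t := by
      intro s hu
      set u : ℝ := t - ε ^ 3 * σ (t / ε) * s with hudef
      -- derivative of inner function
      have d1 : HasDerivAt (fun x : ℝ => x / ε) (1 / ε) t := by
        simpa using (hasDerivAt_id t).div_const ε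
      have d2 : HasDerivAt (fun x : ℝ => σ (x / ε)) (deriv σ (t / ε) * (1 / ε)) t :=
        ((hσ_smooth.differentiable (by simp) (t / ε)).hasDerivAt).comp t d1
      have d3 : HasDerivAt (fun x : ℝ => ε ^ 3 * σ (x / ε) * s)
          (ε ^ 3 * (deriv σ (t / ε) * (1 / ε)) * s) t := (d2.const_mul (ε ^ 3)).mul_const s
      have dg : HasDerivAt (fun x : ℝ => x - ε ^ 3 * σ (x / ε) * s)
          (1 - ε ^ 3 * (deriv σ (t / ε) * (1 / ε)) * s) t := (hasDerivAt_id t).sub d3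
      -- derivative of h at u
      have dh : HasDerivAt h (h' u) u := by
        rcases lt_or_gt_of_ne hu with hu' | hu'
        · have hev : h =ᶠ[nhds u] hm := by
            filter_upwards [Iio_mem_nhds hu'] with x hx
            exact heqm x (le_of_lt hx)
          rw [h'neg u hu']
          exact ((hm_smooth.differentiable (by simp) u).hasDerivAt).congr_of_eventuallyEq hev
        · have hev : h =ᶠ[nhds u] hp := by
            filter_upwards [Ioi_mem_nhds hu'] with x hx
            exact heqp x (le_of_lt hx)
          rw [h'pos u hu']
          exact ((hp_smooth.differentiable (by simp) u).hasDerivAt).congr_of_eventuallyEq hev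
      have dcomp : HasDerivAt (fun x : ℝ => h (x - ε ^ 3 * σ (x / ε) * s))
          (h' u * (1 - ε ^ 3 * (deriv σ (t / ε) * (1 / ε)) * s)) t := dh.comp t dg
      have dfin := dcomp.mul_const (φ s)
      have : h' u * (1 - ε ^ 3 * (deriv σ (t / ε) * (1 / ε)) * s) * φ s = F' s := by
        rw [hF', hσε]
        have : ε ^ 3 * (deriv σ (t / ε) * (1 / ε)) * s = s * ε ^ 2 * deriv σ (t / ε) := by
          field_simp
        rw [this]
      rw [this] at dfin
      exact dfin
    by_cases hz : σ (t / ε) = 0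
    · have ht0 : t ≠ 0 := by
        intro h0
        rw [h0] at hz
        have : σ (0 / ε) = c := hσ_eq (0 / ε) (by simp)
        rw [this] at hz
        exact absurd hz (ne_of_gt hc.1)
      filter_upwards with s
      apply key
      rw [hz]; simpa using ht0
    · have ha : 0 < ε ^ 3 * σ (t / ε) := by
        have := lt_of_le_of_ne (hσ_nonneg (t / ε)) (Ne.symm hz)
        positivity
      have hnull : volume {s : ℝ | ¬ (t - ε ^ 3 * σ (t / ε) * s ≠ 0)} = 0 := by
        refine measure_mono_null (fun s hs => ?_)
          (measure_singleton (t / (ε ^ 3 * σ (t / ε))))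
        simp only [Set.mem_setOf_eq, not_not] at hs
        have hse : s = t / (ε ^ 3 * σ (t / ε)) := by
          field_simp
          nlinarith [hs]
        simpa using hse
      have : ∀ᵐ s : ℝ, t - ε ^ 3 * σ (t / ε) * s ≠ 0 := by
        rw [MeasureTheory.ae_iff]
        exact hnull
      filter_upwards [this] with s hs
      exact key s hs
end

section
/- Let m ≥ 1 be an integer, let δ and δ₀ be reals with 0 < δ₀ ≤ δ, and let s₀ be a real with 0 ≤ s₀ ≤ δ₀/2. Let r₀, r₁, …, r_{m−1} be positive reals with r₀ ≤ δ₀ and r_i ≤ (21/26)·r_{i−1} for all 1 ≤ i ≤ m−1, and let Δs₁, …, Δs_m be reals with 0 < Δs_i ≤ r_{i−1}/2 for all 1 ≤ i ≤ m. Then 2δ − δ₀ + s₀ + Σ_{i=1}^m Δs_i ≤ (28/5)·δ. Consequently, if in addition d ≥ 0 and Δs_{m+1}, Δs_{m+2}, Δs_{m+3}, Δs_{m+4} are reals with 0 ≤ Δs_{m+1} ≤ 13·(π/2 − arcsin(12/13))·δ₀, Δs_{m+2} = d, 0 ≤ Δs_{m+3} ≤ (13π/12)·δ₀, and 0 ≤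 Δs_{m+4} ≤ δ₀, then 2δ − δ₀ + s₀ + Σ_{i=1}^{m+4} Δs_i ≤ C₂·δ + d, where C₂ = 28/5 + 13·(π/2 − arcsin(12/13)) + 13π/12 + 1. -/
open Real Finset in
/-- Lemma 3.6 (length2): the total arclength of the bending curve is bounded by a
universal multiple of `δ` plus the extra length `d`, by geometric decay of the
step lengths (Lemma 3.5) and explicit bounds on the final four pieces. -/
theorem arclength_bound (m : ℕ) (hm : 1 ≤ m) (δ δ₀ s₀ : ℝ)
    (hδ₀pos : 0 < δ₀) (hδ₀δ : δ₀ ≤ δ) (hs₀0 : 0 ≤ s₀) (hs₀ : s₀ ≤ δ₀ / 2)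
    (r : ℕ → ℝ) (hrpos : ∀ i ≤ m - 1, 0 < r i) (hr0 : r 0 ≤ δ₀)
    (hrdec : ∀ i, 1 ≤ i → i ≤ m - 1 → r i ≤ (21 / 26) * r (i - 1))
    (Δs : ℕ → ℝ)
    (hΔpos : ∀ i, 1 ≤ i → i ≤ m → 0 < Δs i)
    (hΔle : ∀ i, 1 ≤ i → i ≤ m → Δs i ≤ r (i - 1) / 2) :
    2 * δ - δ₀ + s₀ + ∑ i ∈ Icc 1 m, Δs i ≤ (28 / 5) * δ ∧
    (∀ d : ℝ, 0 ≤ d →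
      0 ≤ Δs (m + 1) → Δs (m + 1) ≤ 13 * (π / 2 - arcsin (12 / 13)) * δ₀ →
      Δs (m + 2) = d →
      0 ≤ Δs (m + 3) → Δs (m + 3) ≤ (13 * π / 12) * δ₀ →
      0 ≤ Δs (m + 4) → Δs (m + 4) ≤ δ₀ →
      2 * δ - δ₀ + s₀ + ∑ i ∈ Icc 1 (m + 4), Δs i ≤
        (28 / 5 + 13 * (π / 2 - arcsin (12 / 13)) + 13 * π / 12 + 1) * δ + d) := by
  -- geometric decay of r
  have hkey : ∀ i, i ≤ m - 1 → r i ≤ δ₀ * (21 / 26) ^ i := by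
    intro i
    induction i with
    | zero => intro _; simpa using hr0
    | succ n ih =>
      intro h
      have hn : n ≤ m - 1 := Nat.le_of_succ_le h
      have h1 := hrdec (n + 1) (Nat.le_add_left 1 n) h
      have h2 := ih hn
      simp only [Nat.add_sub_cancel] at h1
      calc r (n + 1) ≤ (21 / 26) * r n := h1
        _ ≤ (21 / 26) * (δ₀ * (21 / 26) ^ n) := by nlinarith
        _ = δ₀ * (21 / 26) ^ (n + 1) := by ring
  -- bound each Δs
  have hΔ : ∀ i ∈ Icc 1 m, Δs i ≤ δ₀ / 2 * (21 / 26) ^ (i - 1) := by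
    intro i hi
    rw [mem_Icc] at hi
    have h1 : i - 1 ≤ m - 1 := Nat.sub_le_sub_right hi.2 1
    have := hΔle i hi.1 hi.2
    have := hkey (i - 1) h1
    nlinarith
  have hsum : ∑ i ∈ Icc 1 m, Δs i ≤ ∑ i ∈ Icc 1 m, δ₀ / 2 * (21 / 26) ^ (i - 1) :=
    Finset.sum_le_sum hΔ
  have hre : ∑ i ∈ Icc 1 m, δ₀ / 2 * (21 / 26) ^ (i - 1)
      = δ₀ / 2 * ∑ j ∈ Finset.range m, (21 / 26 : ℝ) ^ j := by
    rw [← Finset.Ico_add_one_right_eq_Icc, Finset.sum_Ico_eq_sum_range, Finset.mul_sum]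
    simp
  have hgeom : ∑ j ∈ Finset.range m, (21 / 26 : ℝ) ^ j ≤ 26 / 5 := by
    rw [geom_sum_eq (by norm_num : (21 / 26 : ℝ) ≠ 1)]
    have h1 : (0 : ℝ) < (21 / 26 : ℝ) ^ m := by positivity
    have h2 : (21 / 26 : ℝ) ^ m ≤ 1 := pow_le_one₀ (by norm_num) (by norm_num)
    rw [div_le_iff_of_neg (by norm_num : (21 / 26 : ℝ) - 1 < 0)]
    nlinarith
  have hmain : ∑ i ∈ Icc 1 m, Δs i ≤ 13 / 5 * δ₀ := by
    calc ∑ i ∈ Icc 1 m, Δs i ≤ δ₀ / 2 * ∑ j ∈ Finset.range m, (21 / 26 : ℝ) ^ j := by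
          rw [← hre]; exact hsum
      _ ≤ δ₀ / 2 * (26 / 5) := by nlinarith
      _ = 13 / 5 * δ₀ := by ring
  have hfirst : 2 * δ - δ₀ + s₀ + ∑ i ∈ Icc 1 m, Δs i ≤ (28 / 5) * δ := by nlinarith
  refine ⟨hfirst, ?_⟩
  intro d hd h1 h1' h2 h3 h3' h4 h4'
  have hsplit : ∑ i ∈ Icc 1 (m + 4), Δs i
      = ∑ i ∈ Icc 1 m, Δs i + Δs (m + 1) + Δs (m + 2) + Δs (m + 3) + Δs (m + 4) := by
    rw [show m + 4 = (m + 3) + 1 from rfl, Finset.sum_Icc_succ_top (by omega),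
      show m + 3 = (m + 2) + 1 from rfl, Finset.sum_Icc_succ_top (by omega),
      show m + 2 = (m + 1) + 1 from rfl, Finset.sum_Icc_succ_top (by omega),
      Finset.sum_Icc_succ_top (by omega)]
  have harc : arcsin (12 / 13 : ℝ) ≤ π / 2 := Real.arcsin_le_pi_div_two _
  have hpi : (0 : ℝ) ≤ π := Real.pi_nonneg
  rw [hsplit]
  nlinarith [mul_le_mul_of_nonneg_left hδ₀δ (by nlinarith : (0:ℝ) ≤ 13 * (π / 2 - arcsin (12 / 13))),
    mul_le_mul_of_nonneg_left hδ₀δ (by nlinarith : (0:ℝ) ≤ 13 * π / 12)]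
end
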